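/- Let H^(1),…,H^(k) be finite-dimensional complex Hilbert spaces and let a be a Hermitian operator on H^(1)⊗…⊗H^(k). Then a is an entanglement witness if and only if the following three conditions all hold: (1) there exists a pure product state p with Tr(a p) > 0; (2) for every pure product state p with Tr(a p) = 0, the separable tangent space C(p) is contained in I_a = {x Hermitian : Tr(x†a) = 0}; (3) a is not positive semidefinite. -/

import Mathlib

open Matrix
open scoped ComplexOrder

namespace EWitness

/-- Operators on the tensor product `H⁽¹⁾ ⊗ ⋯ ⊗ H⁽ᵏ⁾` of finite-dimensional complex
Hilbert spaces (with `dim H⁽ⁱ⁾ = n i`), modeled as matrices indexed by tuples. -/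
abbrev Op {k : ℕ} (n : Fin k → ℕ) := Matrix (∀ i, Fin (n i)) (∀ i, Fin (n i)) ℂ

/-- Tensor (Kronecker) product of one operator per tensor factor. -/
def tensorOp {k : ℕ} (n : Fin k → ℕ) (A : ∀ i, Matrix (Fin (n i)) (Fin (n i)) ℂ) : Op n :=
  Matrix.of fun x y => ∏ i, A i (x i) (y i)

/-- Tensor product of one vector per tensor factor. -/
def tensorVec {k : ℕ} (n : Fin k → ℕ) (v : ∀ i, Fin (n i) → ℂ) : (∀ i, Fin (n i)) → ℂ :=
  fun x => ∏ i, v i (x i)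

/-- The rank one projector `|v⟩⟨v|`. -/
def proj {m : Type*} (v : m → ℂ) : Matrix m m ℂ := Matrix.vecMulVec v (star v)

/-- The trace inner product `(a,b) = Tr(a† b)` (its real part; on the real vector space of
Hermitian operators this is exactly the trace inner product, which is real-valued there). -/
noncomputable def tinner {m : Type*} [Fintype m] (a b : Matrix m m ℂ) : ℝ :=
  ((aᴴ * b).trace).re

/-- A state: a positive semidefinite trace-one operator. -/
noncomputable def IsState {m : Type*} [Fintype m] (ρ : Matrix m m ℂ) : Prop :=
  ρ.PosSemidef ∧ ρ.trace = 1

/-- A pure product state `⊗ᵢ |e⁽ⁱ⁾⟩⟨e⁽ⁱ⁾|` with the `e⁽ⁱ⁾` unit vectors. -/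
def IsPureProduct {k : ℕ} (n : Fin k → ℕ) (p : Op n) : Prop :=
  ∃ e : ∀ i, Fin (n i) → ℂ,
    (∀ i, star (e i) ⬝ᵥ e i = 1) ∧ p = tensorOp n fun i => proj (e i)

/-- A separable state: a finite convex combination of tensor products of states. -/
noncomputable def IsSeparable {k : ℕ} (n : Fin k → ℕ) (ϱ : Op n) : Prop :=
  ∃ (N : ℕ) (w : Fin N → ℝ) (ρ : Fin N → ∀ i, Matrix (Fin (n i)) (Fin (n i)) ℂ),
    (∀ j, 0 ≤ w j) ∧ ((∑ j, w j) = 1) ∧ (∀ j i, IsState (ρ j i)) ∧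
    ϱ = ∑ j, (w j : ℂ) • tensorOp n (ρ j)

/-- The generating set of `τ⁽ⁱ⁾`: operators `I ⊗ ⋯ ⊗ h⁽ⁱ⁾ ⊗ ⋯ ⊗ I`
with `h⁽ⁱ⁾` Hermitian and traceless. -/
def tauGen {k : ℕ} (n : Fin k → ℕ) (i : Fin k) : Set (Op n) :=
  {T | ∃ h : Matrix (Fin (n i)) (Fin (n i)) ℂ, h.IsHermitian ∧ h.trace = 0 ∧
      T = tensorOp n (Function.update (fun j => (1 : Matrix (Fin (n j)) (Fin (n j)) ℂ)) i h)}

/-- `τ⁽ⁱ⁾`: the real span of operators `I ⊗ ⋯ ⊗ h⁽ⁱ⁾ ⊗ ⋯ ⊗ I`. -/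
noncomputable def tauComp {k : ℕ} (n : Fin k → ℕ) (i : Fin k) : Submodule ℝ (Op n) :=
  Submodule.span ℝ (tauGen n i)

/-- `τ = span(⋃ᵢ τ⁽ⁱ⁾)`. -/
noncomputable def tau {k : ℕ} (n : Fin k → ℕ) : Submodule ℝ (Op n) :=
  Submodule.span ℝ (⋃ i, tauGen n i)

/-- The separable tangent space `C(p) = {i[p,t] : t ∈ τ}`. -/
def sepTangent {k : ℕ} (n : Fin k → ℕ) (p : Op n) : Set (Op n) :=
  {x | ∃ t ∈ tau n, x = Complex.I • (p * t - t * p)}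

/-- Condition (★): for every pure product state `p` orthogonal to `a`, the separable tangent
space `C(p)` is contained in the hyperplane `I_a = {x : (x,a) = 0}`. -/
def StarCond {k : ℕ} (n : Fin k → ℕ) (a : Op n) : Prop :=
  ∀ p : Op n, IsPureProduct n p → tinner a p = 0 →
    sepTangent n p ⊆ {x : Op n | tinner x a = 0}

/-- An operator is supported on a subspace `W` if it vanishes on the orthogonal
complement of `W` and its range is contained in `W`. -/
def SupportedOn {m : Type*} [Fintype m] (W : Submodule ℂ (m → ℂ)) (M : Matrix m m ℂ) : Prop :=
  (∀ v, M.mulVec v ∈ W) ∧ (∀ v, (∀ w ∈ W, star w ⬝ᵥ v = 0) → M.mulVec v = 0)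

/-!
Write `prodForm a e = ⟨⊗ e, a (⊗ e)⟩` for the expectation of `a` in a product vector. Nonnegativity
on separable states is `prodForm a ≥ 0`, nonnegativity on all states is `a ≥ 0`, and (★) says
precisely that every zero of `prodForm a` is a critical point: the commutators `i[p, t]`, `t ∈ τ`,
are the first-order variations of the product vector of `p`, one factor at a time.

A nonnegative function is critical at its zeros, and `prodForm a ≡ 0` forces `a = 0` by
polarization; this gives the forward direction. Conversely, in each factor `prodForm a` is a
Hermitian form all of whose zeros are critical, hence a semidefinite one. Suppose
`prodForm a e < 0 < prodForm a f`, and induct on the set of factors where `e` and `f` differ. If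
`i` is one of them, semidefiniteness in the `i`-th factor and the induction hypothesis show that
swapping the `i`-th factors of `e` and `f` yields two zeros; the derivatives there vanish, so
replacing the `i`-th factor of both `e` and `f` by `e i + f i` changes neither value, while `i`
is no longer a factor where they differ.
-/

theorem quadratic_mul_nonneg_of_roots_double {A B C : ℝ}
    (h : ∀ t : ℝ, A + B * t + C * t ^ 2 = 0 → B + 2 * C * t = 0) : 0 ≤ A * C := by
  by_contra! hAC
  have hC : C ≠ 0 := by rintro rfl; simp at hAC
  have hdisc : 0 ≤ discrim C B A := by unfold discrim; nlinarith [sq_nonneg B]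
  obtain ⟨t, ht⟩ := exists_quadratic_eq_zero hC ⟨√(discrim C B A), (Real.mul_self_sqrt hdisc).symm⟩
  have hroot : A + B * t + C * t ^ 2 = 0 := by linear_combination ht
  have hA : A = C * t ^ 2 := by linear_combination hroot - t * h t hroot
  rw [hA] at hAC
  nlinarith [sq_nonneg (C * t)]

lemma sesq_eq_zero_of_forall_self {V : Type*} [AddCommGroup V] [Module ℂ V] (β : V → V → ℂ)
    (hexp : ∀ x y (c : ℂ), β (x + c • y) (x + c • y) =
      β x x + c * β x y + star c * β y x + star c * c * β y y)
    (h0 : ∀ x, β x x = 0) (x y : V) : β x y = 0 := by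
  have h1 := hexp x y 1
  have hI := hexp x y Complex.I
  simp only [h0, star_one, Complex.star_def, Complex.conj_I] at h1 hI
  linear_combination (-1 / 2 : ℂ) * h1 + (Complex.I / 2) * hI + (β x y - β y x) / 2 * Complex.I_sq

section Matrices

variable {m : Type*} [Fintype m]

lemma star_dotProduct_mulVec_of_isHermitian {M : Matrix m m ℂ} (hM : M.IsHermitian)
    (v w : m → ℂ) : star v ⬝ᵥ M *ᵥ w = star (star w ⬝ᵥ M *ᵥ v) := by
  rw [star_dotProduct, star_mulVec, hM.eq, ← dotProduct_mulVec]

lemma re_star_smul_dotProduct_mulVec_smul (M : Matrix m m ℂ) (r s : ℝ) (v w : m → ℂ) :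
    (star ((r : ℂ) • v) ⬝ᵥ M *ᵥ ((s : ℂ) • w)).re = r * s * (star v ⬝ᵥ M *ᵥ w).re := by
  simp only [star_smul, Complex.star_def, Complex.conj_ofReal, smul_dotProduct, mulVec_smul,
    dotProduct_smul, smul_eq_mul, Complex.re_ofReal_mul]
  ring

lemma re_star_dotProduct_mulVec_add_smul {M : Matrix m m ℂ} (hM : M.IsHermitian)
    (v w : m → ℂ) (s : ℝ) :
    (star (v + (s : ℂ) • w) ⬝ᵥ M *ᵥ (v + (s : ℂ) • w)).re =
      (star v ⬝ᵥ M *ᵥ v).re + 2 * s * (star w ⬝ᵥ M *ᵥ v).re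
        + s ^ 2 * (star w ⬝ᵥ M *ᵥ w).re := by
  have hsymm : (star v ⬝ᵥ M *ᵥ w).re = (star w ⬝ᵥ M *ᵥ v).re := by
    rw [star_dotProduct_mulVec_of_isHermitian hM, Complex.star_def, Complex.conj_re]
  have hvw := re_star_smul_dotProduct_mulVec_smul M 1 s v w
  have hwv := re_star_smul_dotProduct_mulVec_smul M s 1 w v
  have hww := re_star_smul_dotProduct_mulVec_smul M s s w w
  simp only [Complex.ofReal_one, one_smul] at hvw hwv
  rw [star_add, add_dotProduct, mulVec_add, dotProduct_add, dotProduct_add, Complex.add_re,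
    Complex.add_re, Complex.add_re, hvw, hwv, hww, hsymm]
  ring

lemma tinner_add_left (x y a : Matrix m m ℂ) : tinner (x + y) a = tinner x a + tinner y a := by
  simp [tinner, conjTranspose_add, Matrix.add_mul, trace_add]

lemma tinner_smul_left (r : ℝ) (x a : Matrix m m ℂ) : tinner (r • x) a = r * tinner x a := by
  simp [tinner, conjTranspose_smul, trace_smul]

lemma tinner_ofReal_smul_right (a x : Matrix m m ℂ) (r : ℝ) :
    tinner a ((r : ℂ) • x) = r * tinner a x := by
  simp only [tinner, Matrix.mul_smul, trace_smul, smul_eq_mul, Complex.re_ofReal_mul]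

lemma tinner_sum_right {ι : Type*} (a : Matrix m m ℂ) (s : Finset ι) (x : ι → Matrix m m ℂ) :
    tinner a (∑ j ∈ s, x j) = ∑ j ∈ s, tinner a (x j) := by
  simp only [tinner, Matrix.mul_sum, trace_sum, Complex.re_sum]

lemma trace_proj_mul (v : m → ℂ) (M : Matrix m m ℂ) :
    (proj v * M).trace = star v ⬝ᵥ M *ᵥ v := by
  rw [proj, vecMulVec_mul, trace_vecMulVec, dotProduct_comm, dotProduct_mulVec]

lemma tinner_proj {a : Matrix m m ℂ} (ha : a.IsHermitian) (v : m → ℂ) :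
    tinner a (proj v) = (star v ⬝ᵥ a *ᵥ v).re := by
  rw [tinner, ha.eq, trace_mul_comm, trace_proj_mul]

lemma tinner_commutator_proj {a T : Matrix m m ℂ} (ha : a.IsHermitian)
    (hT : T.IsHermitian) (v : m → ℂ) :
    tinner (Complex.I • (proj v * T - T * proj v)) a = -2 * (star (T *ᵥ v) ⬝ᵥ a *ᵥ v).im := by
  have hp : (proj v)ᴴ = proj v := by simp [proj]
  have hpTa : (proj v * T * a).trace = star (T *ᵥ v) ⬝ᵥ a *ᵥ v := by
    rw [mul_assoc, trace_proj_mul, star_mulVec, hT.eq, ← dotProduct_mulVec, mulVec_mulVec]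
  have hTpa : (T * proj v * a).trace = star (star (T *ᵥ v) ⬝ᵥ a *ᵥ v) := by
    rw [mul_assoc, trace_mul_comm, mul_assoc, trace_proj_mul, ← mulVec_mulVec,
      star_dotProduct_mulVec_of_isHermitian ha]
  rw [tinner, conjTranspose_smul, conjTranspose_sub, conjTranspose_mul, conjTranspose_mul, hp,
    hT.eq, smul_mul_assoc, sub_mul, trace_smul, trace_sub, hpTa, hTpa]
  simp only [Complex.star_def, Complex.conj_I, smul_eq_mul, Complex.mul_re, Complex.neg_re,
    Complex.neg_im, Complex.I_re, Complex.I_im, Complex.sub_re, Complex.sub_im, Complex.conj_re,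
    Complex.conj_im]
  ring

lemma isState_proj {u : m → ℂ} (hu : star u ⬝ᵥ u = 1) : IsState (proj u) :=
  ⟨posSemidef_vecMulVec_self_star u, by rw [proj, trace_vecMulVec, dotProduct_comm, hu]⟩

lemma exists_unit_smul {v : m → ℂ} (hv : v ≠ 0) :
    ∃ r : ℝ, 0 < r ∧ ∃ u : m → ℂ, star u ⬝ᵥ u = 1 ∧ v = (r : ℂ) • u := by
  obtain ⟨hre, him⟩ := Complex.pos_iff.1 (dotProduct_star_self_pos_iff.2 hv)
  set s := (star v ⬝ᵥ v).re
  have hs : star v ⬝ᵥ v = s := Complex.ext rfl him.symm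
  have hr : 0 < √s := Real.sqrt_pos.2 hre
  refine ⟨√s, hr, (((√s)⁻¹ : ℝ) : ℂ) • v, ?_, ?_⟩
  · rw [star_smul, smul_dotProduct, dotProduct_smul, hs]
    simp only [Complex.star_def, Complex.conj_ofReal, smul_eq_mul, ← Complex.ofReal_mul]
    rw [Complex.ofReal_eq_one, ← mul_assoc, ← mul_inv, Real.mul_self_sqrt hre.le,
      inv_mul_cancel₀ hre.ne']
  · rw [smul_smul, ← Complex.ofReal_mul, mul_inv_cancel₀ hr.ne', Complex.ofReal_one, one_smul]

lemma exists_isState_tinner_neg_iff {a : Matrix m m ℂ} (ha : a.IsHermitian) :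
    (∃ q, IsState q ∧ tinner a q < 0) ↔ ¬ a.PosSemidef := by
  constructor
  · rintro ⟨q, ⟨hq, -⟩, hneg⟩ hpsd
    obtain ⟨N, v, rfl⟩ := posSemidef_iff_eq_sum_vecMulVec.1 hq
    have hnonneg : 0 ≤ tinner a (∑ r, proj (v r)) := by
      rw [tinner_sum_right]
      exact Finset.sum_nonneg fun r _ => (tinner_proj ha (v r)).symm ▸
        hpsd.re_dotProduct_nonneg (v r)
    exact hnonneg.not_gt hneg
  · intro hpsd
    obtain ⟨v, hv⟩ : ∃ v, ¬ 0 ≤ star v ⬝ᵥ a *ᵥ v := by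
      by_contra! h
      exact hpsd (.of_dotProduct_mulVec_nonneg ha h)
    have hneg : (star v ⬝ᵥ a *ᵥ v).re < 0 := by
      by_contra! h
      exact hv (Complex.nonneg_iff.2 ⟨h, (ha.im_star_dotProduct_mulVec_self v).symm⟩)
    have hv0 : v ≠ 0 := by
      rintro rfl
      simp at hneg
    obtain ⟨r, hr, u, hu, rfl⟩ := exists_unit_smul hv0
    refine ⟨proj u, isState_proj hu, ?_⟩
    rw [re_star_smul_dotProduct_mulVec_smul] at hneg
    rw [tinner_proj ha]
    nlinarith [mul_pos hr hr]

end Matrices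

section Tensor

variable {k : ℕ} {n : Fin k → ℕ}

lemma tensorVec_update (e : ∀ i, Fin (n i) → ℂ) (i : Fin k) (x : Fin (n i) → ℂ) :
    tensorVec n (Function.update e i x) =
      fun z => x (z i) * ∏ j ∈ Finset.univ.erase i, e j (z j) := by
  funext z
  rw [tensorVec, ← Finset.mul_prod_erase Finset.univ _ (Finset.mem_univ i),
    Function.update_self]
  congr 1
  exact Finset.prod_congr rfl fun j hj => by rw [Function.update_of_ne (Finset.ne_of_mem_erase hj)]

lemma tensorVec_update_add (e : ∀ i, Fin (n i) → ℂ) (i : Fin k) (x y : Fin (n i) → ℂ) :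
    tensorVec n (Function.update e i (x + y)) =
      tensorVec n (Function.update e i x) + tensorVec n (Function.update e i y) := by
  simp only [tensorVec_update, Pi.add_apply, add_mul]
  rfl

lemma tensorVec_update_smul (e : ∀ i, Fin (n i) → ℂ) (i : Fin k) (c : ℂ) (x : Fin (n i) → ℂ) :
    tensorVec n (Function.update e i (c • x)) = c • tensorVec n (Function.update e i x) := by
  simp only [tensorVec_update, Pi.smul_apply, smul_eq_mul, mul_assoc]
  rfl

lemma tensorVec_smul (c : Fin k → ℂ) (e : ∀ i, Fin (n i) → ℂ) :
    tensorVec n (fun j => c j • e j) = (∏ j, c j) • tensorVec n e := by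
  funext z
  simp only [tensorVec, Pi.smul_apply, smul_eq_mul, ← Finset.prod_mul_distrib]

lemma tensorVec_eq_zero {e : ∀ i, Fin (n i) → ℂ} {i : Fin k} (h : e i = 0) :
    tensorVec n e = 0 := by
  rw [← Function.update_eq_self i e, h, ← zero_smul ℂ (0 : Fin (n i) → ℂ),
    tensorVec_update_smul, zero_smul]

lemma tensorVec_single (x : ∀ i, Fin (n i)) :
    tensorVec n (fun i => Pi.single (x i) 1) = Pi.single x 1 := by
  funext z
  by_cases hz : z = x
  · subst hz
    simp [tensorVec]
  · obtain ⟨i, hi⟩ := Function.ne_iff.1 hz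
    rw [tensorVec, Pi.single_eq_of_ne hz,
      Finset.prod_eq_zero (Finset.mem_univ i) (Pi.single_eq_of_ne hi 1)]

lemma exists_unit_tuple {e : ∀ i, Fin (n i) → ℂ} (he : ∀ i, e i ≠ 0) :
    ∃ c : Fin k → ℝ, (∀ i, 0 < c i) ∧ ∃ f : ∀ i, Fin (n i) → ℂ,
      (∀ i, star (f i) ⬝ᵥ f i = 1) ∧ e = fun i => (c i : ℂ) • f i := by
  choose c hc f hf hcf using fun i => exists_unit_smul (he i)
  exact ⟨c, hc, f, hf, funext hcf⟩

lemma tensorOp_proj (e : ∀ i, Fin (n i) → ℂ) :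
    tensorOp n (fun i => proj (e i)) = proj (tensorVec n e) := by
  ext x y
  simp only [tensorOp, Matrix.of_apply, proj, vecMulVec_apply, tensorVec, Pi.star_apply,
    Complex.star_def, map_prod, ← Finset.prod_mul_distrib]

lemma tensorOp_mulVec (A : ∀ i, Matrix (Fin (n i)) (Fin (n i)) ℂ) (e : ∀ i, Fin (n i) → ℂ) :
    tensorOp n A *ᵥ tensorVec n e = tensorVec n (fun i => A i *ᵥ e i) := by
  funext x
  simp only [mulVec, dotProduct, tensorOp, Matrix.of_apply, tensorVec]
  rw [Finset.prod_univ_sum, ← Fintype.piFinset_univ]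
  exact Finset.sum_congr rfl fun y _ => Finset.prod_mul_distrib.symm

lemma tensorOp_sum {κ : Fin k → Type*} [∀ i, Fintype (κ i)]
    (A : ∀ i, κ i → Matrix (Fin (n i)) (Fin (n i)) ℂ) :
    tensorOp n (fun i => ∑ r, A i r) = ∑ φ : ∀ i, κ i, tensorOp n (fun i => A i (φ i)) := by
  ext x y
  simp only [tensorOp, Matrix.of_apply, Matrix.sum_apply]
  rw [Finset.prod_univ_sum, Fintype.piFinset_univ]

lemma tensorOp_conjTranspose (A : ∀ i, Matrix (Fin (n i)) (Fin (n i)) ℂ) :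
    (tensorOp n A)ᴴ = tensorOp n (fun i => (A i)ᴴ) := by
  ext x y
  simp only [tensorOp, conjTranspose_apply, Matrix.of_apply, Complex.star_def, map_prod]

lemma isHermitian_tensorOp {A : ∀ i, Matrix (Fin (n i)) (Fin (n i)) ℂ}
    (hA : ∀ i, (A i).IsHermitian) : (tensorOp n A).IsHermitian := by
  rw [IsHermitian, tensorOp_conjTranspose]
  exact congrArg _ (funext fun i => (hA i).eq)

lemma tensorOp_update_one_mulVec (i : Fin k) (h : Matrix (Fin (n i)) (Fin (n i)) ℂ)
    (e : ∀ i, Fin (n i) → ℂ) :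
    tensorOp n (Function.update (fun _ => 1) i h) *ᵥ tensorVec n e =
      tensorVec n (Function.update e i (h *ᵥ e i)) := by
  rw [tensorOp_mulVec]
  congr 1
  funext j
  by_cases hj : j = i
  · subst hj; simp
  · simp [Function.update_of_ne hj]

lemma isSeparable_of_isPureProduct {p : Op n} (hp : IsPureProduct n p) : IsSeparable n p := by
  obtain ⟨e, he, rfl⟩ := hp
  exact ⟨1, fun _ => 1, fun _ i => proj (e i), fun _ => zero_le_one, by simp,
    fun _ i => isState_proj (he i), by simp⟩

end Tensor

section ProductForm

variable {k : ℕ} {n : Fin k → ℕ} {a : Op n}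

noncomputable def prodForm (a : Op n) (e : ∀ i, Fin (n i) → ℂ) : ℝ :=
  (star (tensorVec n e) ⬝ᵥ a *ᵥ tensorVec n e).re

/-- Half the derivative of `prodForm a` at `e` in the direction `w` of the `i`-th factor. -/
noncomputable def prodFormDeriv (a : Op n) (e : ∀ i, Fin (n i) → ℂ) (i : Fin k)
    (w : Fin (n i) → ℂ) : ℝ :=
  (star (tensorVec n (Function.update e i w)) ⬝ᵥ a *ᵥ tensorVec n e).re

def ZerosAreCritical (a : Op n) : Prop :=
  ∀ e, prodForm a e = 0 → ∀ i w, prodFormDeriv a e i w = 0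

lemma tinner_tensorOp_proj (ha : a.IsHermitian) (e : ∀ i, Fin (n i) → ℂ) :
    tinner a (tensorOp n fun i => proj (e i)) = prodForm a e := by
  rw [tensorOp_proj, tinner_proj ha, prodForm]

lemma prodForm_eq_zero_of_eq_zero (a : Op n) {e : ∀ i, Fin (n i) → ℂ} {i : Fin k}
    (h : e i = 0) : prodForm a e = 0 := by
  simp [prodForm, tensorVec_eq_zero h]

lemma prodForm_smul (a : Op n) (c : Fin k → ℝ) (e : ∀ i, Fin (n i) → ℂ) :
    prodForm a (fun j => (c j : ℂ) • e j) = (∏ j, c j) ^ 2 * prodForm a e := by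
  rw [prodForm, tensorVec_smul, ← Complex.ofReal_prod, re_star_smul_dotProduct_mulVec_smul, sq,
    prodForm]

lemma prodFormDeriv_smul (a : Op n) (c : Fin k → ℝ) (e : ∀ i, Fin (n i) → ℂ) (i : Fin k)
    (w : Fin (n i) → ℂ) :
    prodFormDeriv a (fun j => (c j : ℂ) • e j) i ((c i : ℂ) • w) =
      (∏ j, c j) ^ 2 * prodFormDeriv a e i w := by
  have hupdate : Function.update (fun j => (c j : ℂ) • e j) i ((c i : ℂ) • w) =
      fun j => (c j : ℂ) • Function.update e i w j := by
    funext j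
    by_cases hj : j = i
    · subst hj; simp
    · simp [Function.update_of_ne hj]
  rw [prodFormDeriv, hupdate, tensorVec_smul, tensorVec_smul, ← Complex.ofReal_prod,
    re_star_smul_dotProduct_mulVec_smul, sq, prodFormDeriv]

lemma prodForm_update_add_smul (ha : a.IsHermitian) (e : ∀ i, Fin (n i) → ℂ)
    (i : Fin k) (w : Fin (n i) → ℂ) (s : ℝ) :
    prodForm a (Function.update e i (e i + (s : ℂ) • w)) =
      prodForm a e + 2 * s * prodFormDeriv a e i w
        + s ^ 2 * prodForm a (Function.update e i w) := by
  rw [prodForm, tensorVec_update_add, tensorVec_update_smul, Function.update_eq_self,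
    re_star_dotProduct_mulVec_add_smul ha, prodForm, prodFormDeriv, prodForm]

lemma prodFormDeriv_update_add_smul (a : Op n) (e : ∀ i, Fin (n i) → ℂ) (i : Fin k)
    (w : Fin (n i) → ℂ) (s : ℝ) :
    prodFormDeriv a (Function.update e i (e i + (s : ℂ) • w)) i w =
      prodFormDeriv a e i w + s * prodForm a (Function.update e i w) := by
  rw [prodFormDeriv, Function.update_idem, tensorVec_update_add, tensorVec_update_smul,
    Function.update_eq_self, mulVec_add, mulVec_smul, dotProduct_add, dotProduct_smul,
    Complex.add_re, smul_eq_mul, Complex.re_ofReal_mul, prodFormDeriv, prodForm]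

lemma zerosAreCritical_of_unit
    (h : ∀ f : ∀ i, Fin (n i) → ℂ, (∀ i, star (f i) ⬝ᵥ f i = 1) → prodForm a f = 0 →
      ∀ (i : Fin k) (w : Fin (n i) → ℂ), prodFormDeriv a f i w = 0) :
    ZerosAreCritical a := by
  intro e he i w
  by_cases hne : ∀ j, e j ≠ 0
  · obtain ⟨c, hc, f, hf, rfl⟩ := exists_unit_tuple hne
    have hprod : (∏ j, c j) ^ 2 ≠ 0 := pow_ne_zero _ (Finset.prod_pos fun j _ => hc j).ne'
    rw [prodForm_smul, mul_eq_zero, or_iff_right hprod] at he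
    have hw : w = (c i : ℂ) • (((c i)⁻¹ : ℝ) : ℂ) • w := by
      rw [smul_smul, ← Complex.ofReal_mul, mul_inv_cancel₀ (hc i).ne', Complex.ofReal_one,
        one_smul]
    rw [hw, prodFormDeriv_smul, h f hf he, mul_zero]
  · push Not at hne
    obtain ⟨j, hj⟩ := hne
    simp [prodFormDeriv, tensorVec_eq_zero hj]

lemma eq_zero_of_forall_tensorVec (a : Op n)
    (h : ∀ e, star (tensorVec n e) ⬝ᵥ a *ᵥ tensorVec n e = 0) : a = 0 := by
  have hvanish : ∀ S : Finset (Fin k), ∀ u v : ∀ i, Fin (n i) → ℂ, (∀ j ∉ S, u j = v j) →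
      star (tensorVec n u) ⬝ᵥ a *ᵥ tensorVec n v = 0 := by
    intro S
    induction S using Finset.induction_on with
    | empty =>
      intro u v huv
      rw [show u = v from funext fun j => huv j (Finset.notMem_empty j)]
      exact h v
    | @insert i S _ ih =>
      intro u v huv
      have hβ := sesq_eq_zero_of_forall_self (fun x y =>
          star (tensorVec n (Function.update u i x)) ⬝ᵥ a *ᵥ tensorVec n (Function.update v i y))
        (fun x y c => by
          simp only [tensorVec_update_add, tensorVec_update_smul, star_add, star_smul,
            add_dotProduct, smul_dotProduct, mulVec_add, mulVec_smul, dotProduct_add,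
            dotProduct_smul, smul_eq_mul]
          ring)
        (fun x => ih _ _ fun j hj => by
          by_cases hji : j = i
          · subst hji; simp
          · simp only [Function.update_of_ne hji]
            exact huv j (by simp [hji, hj]))
        (u i) (v i)
      simpa only [Function.update_eq_self] using hβ
  ext x y
  have hxy := hvanish Finset.univ (fun i => Pi.single (x i) 1) (fun i => Pi.single (y i) 1)
    (by simp)
  rwa [tensorVec_single, tensorVec_single, mulVec_single_one, Pi.star_single, star_one,
    single_dotProduct, one_mul] at hxy

lemma eq_zero_of_prodForm_eq_zero (ha : a.IsHermitian)
    (h : ∀ e, prodForm a e = 0) : a = 0 :=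
  eq_zero_of_forall_tensorVec a fun e => Complex.ext (h e) (ha.im_star_dotProduct_mulVec_self _)

lemma forall_isSeparable_tinner_nonneg_iff (ha : a.IsHermitian) :
    (∀ ϱ, IsSeparable n ϱ → 0 ≤ tinner a ϱ) ↔ ∀ e, 0 ≤ prodForm a e := by
  constructor
  · intro h e
    by_cases he : ∀ i, e i ≠ 0
    · obtain ⟨c, -, f, hf, rfl⟩ := exists_unit_tuple he
      rw [prodForm_smul, ← tinner_tensorOp_proj ha]
      exact mul_nonneg (sq_nonneg _) (h _ (isSeparable_of_isPureProduct ⟨f, hf, rfl⟩))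
    · push Not at he
      obtain ⟨i, hi⟩ := he
      rw [prodForm_eq_zero_of_eq_zero a hi]
  · rintro h ϱ ⟨N, w, ρ, hw, -, hρ, rfl⟩
    rw [tinner_sum_right]
    refine Finset.sum_nonneg fun j _ => ?_
    rw [tinner_ofReal_smul_right]
    refine mul_nonneg (hw j) ?_
    choose M v hv using fun i => posSemidef_iff_eq_sum_vecMulVec.1 (hρ j i).1
    rw [show ρ j = fun i => ∑ r, proj (v i r) from funext hv, tensorOp_sum, tinner_sum_right]
    exact Finset.sum_nonneg fun φ _ => (tinner_tensorOp_proj ha _).symm ▸ h _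

lemma exists_isPureProduct_tinner_pos_iff (ha : a.IsHermitian) :
    (∃ p, IsPureProduct n p ∧ 0 < tinner a p) ↔ ∃ e, 0 < prodForm a e := by
  constructor
  · rintro ⟨p, ⟨f, -, rfl⟩, hp⟩
    exact ⟨f, tinner_tensorOp_proj ha f ▸ hp⟩
  · rintro ⟨e, he⟩
    have hne : ∀ i, e i ≠ 0 := fun i hi => he.ne' (prodForm_eq_zero_of_eq_zero a hi)
    obtain ⟨c, -, f, hf, rfl⟩ := exists_unit_tuple hne
    rw [prodForm_smul] at he
    refine ⟨_, ⟨f, hf, rfl⟩, ?_⟩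
    rw [tinner_tensorOp_proj ha]
    exact pos_of_mul_pos_right he (sq_nonneg _)

lemma tinner_commutator_tauGen (ha : a.IsHermitian) (e : ∀ i, Fin (n i) → ℂ) (i : Fin k)
    {h : Matrix (Fin (n i)) (Fin (n i)) ℂ} (hh : h.IsHermitian) :
    tinner (Complex.I • ((tensorOp n fun j => proj (e j)) *
        tensorOp n (Function.update (fun _ => 1) i h) -
      tensorOp n (Function.update (fun _ => 1) i h) * tensorOp n fun j => proj (e j))) a =
      -2 * prodFormDeriv a e i (Complex.I • h *ᵥ e i) := by
  have hT : (tensorOp n (Function.update (fun _ => 1) i h)).IsHermitian := by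
    refine isHermitian_tensorOp fun j => ?_
    by_cases hj : j = i
    · subst hj; simpa using hh
    · simp [Function.update_of_ne hj]
  rw [tensorOp_proj, tinner_commutator_proj ha hT, tensorOp_update_one_mulVec, prodFormDeriv,
    tensorVec_update_smul, star_smul, smul_dotProduct]
  simp [Complex.mul_re]

lemma prodFormDeriv_eq_zero_of_starCond (ha : a.IsHermitian) (hstar : StarCond n a)
    {f : ∀ i, Fin (n i) → ℂ} (hf : ∀ i, star (f i) ⬝ᵥ f i = 1) (h0 : prodForm a f = 0)
    (i : Fin k) (w : Fin (n i) → ℂ) : prodFormDeriv a f i w = 0 := by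
  set μ := star (f i) ⬝ᵥ w
  set w' := w - μ • f i
  have hfw' : star (f i) ⬝ᵥ w' = 0 := by
    simp only [w', dotProduct_sub, dotProduct_smul, hf i, smul_eq_mul, mul_one, μ, sub_self]
  have hw'f : star w' ⬝ᵥ f i = 0 := by
    rw [star_dotProduct, hfw', star_zero]
  have hform : star (tensorVec n f) ⬝ᵥ a *ᵥ tensorVec n f = 0 :=
    Complex.ext h0 (ha.im_star_dotProduct_mulVec_self _)
  -- The component of `w` along `f i` pairs with `⟨⊗f, a ⊗f⟩ = 0`.
  have hsplit : prodFormDeriv a f i w = prodFormDeriv a f i w' := by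
    rw [prodFormDeriv, ← sub_add_cancel w (μ • f i), tensorVec_update_add, tensorVec_update_smul,
      Function.update_eq_self, star_add, star_smul, add_dotProduct, smul_dotProduct, hform,
      smul_zero, add_zero, prodFormDeriv]
  -- `w' = i h (f i)` for the traceless Hermitian generator `h = i (|f⟩⟨w'| - |w'⟩⟨f|)`.
  set h := Complex.I • (vecMulVec (f i) (star w') - vecMulVec w' (star (f i)))
  have hh : h.IsHermitian := by
    simp only [h, IsHermitian, conjTranspose_smul, conjTranspose_sub, conjTranspose_vecMulVec,
      star_star, Complex.star_def, Complex.conj_I, neg_smul, ← smul_neg, neg_sub]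
  have htr : h.trace = 0 := by
    simp only [h, trace_smul, trace_sub, trace_vecMulVec, dotProduct_comm _ (star w'),
      dotProduct_comm w', hw'f, hfw', sub_zero, smul_zero]
  have hw' : Complex.I • h *ᵥ f i = w' := by
    simp only [h, smul_mulVec, sub_mulVec, vecMulVec_mulVec, hw'f, hf i, smul_smul]
    simp
  have hcomm : tinner _ a = 0 := hstar _ ⟨f, hf, rfl⟩ (by rw [tinner_tensorOp_proj ha, h0])
    ⟨_, Submodule.subset_span (Set.mem_iUnion.2 ⟨i, h, hh, htr, rfl⟩), rfl⟩
  rw [tinner_commutator_tauGen ha f i hh, hw'] at hcomm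
  rw [hsplit]
  linarith

lemma starCond_iff_zerosAreCritical (ha : a.IsHermitian) : StarCond n a ↔ ZerosAreCritical a := by
  refine ⟨fun hstar => zerosAreCritical_of_unit fun f hf h0 =>
    prodFormDeriv_eq_zero_of_starCond ha hstar hf h0, ?_⟩
  rintro hz p ⟨f, -, rfl⟩ hp x ⟨t, ht, rfl⟩
  rw [tinner_tensorOp_proj ha] at hp
  set p := tensorOp n fun i => proj (f i)
  show tinner _ a = 0
  induction ht using Submodule.span_induction with
  | mem t ht =>
    obtain ⟨i, h, hh, -, rfl⟩ := Set.mem_iUnion.1 ht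
    rw [tinner_commutator_tauGen ha f i hh, hz f hp, mul_zero]
  | zero => simp [tinner]
  | add x y _ _ hx hy =>
    rw [show Complex.I • (p * (x + y) - (x + y) * p) =
        Complex.I • (p * x - x * p) + Complex.I • (p * y - y * p) by
      simp only [mul_add, add_mul, ← smul_add]; abel_nf,
      tinner_add_left, hx, hy, add_zero]
  | smul r x _ hx =>
    rw [show Complex.I • (p * (r • x) - (r • x) * p) = r • (Complex.I • (p * x - x * p)) by
      rw [mul_smul_comm, smul_mul_assoc, ← smul_sub, smul_comm],
      tinner_smul_left, hx, mul_zero]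

lemma zerosAreCritical_of_nonneg (ha : a.IsHermitian) (h : ∀ e, 0 ≤ prodForm a e) :
    ZerosAreCritical a := by
  intro e he i w
  have hquad : ∀ s : ℝ,
      0 ≤ prodForm a (Function.update e i w) * (s * s) + 2 * prodFormDeriv a e i w * s + 0 := by
    intro s
    have := h (Function.update e i (e i + (s : ℂ) • w))
    rw [prodForm_update_add_smul ha, he] at this
    linarith
  have := discrim_le_zero hquad
  unfold discrim at this
  nlinarith [sq_nonneg (prodFormDeriv a e i w)]

lemma prodForm_update_mul_nonneg (ha : a.IsHermitian) (hz : ZerosAreCritical a)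
    (e : ∀ i, Fin (n i) → ℂ) (i : Fin k) (u v : Fin (n i) → ℂ) :
    0 ≤ prodForm a (Function.update e i v) * prodForm a (Function.update e i u) := by
  set z := Function.update e i v
  have hzu : Function.update z i u = Function.update e i u := Function.update_idem _ _ _
  refine quadratic_mul_nonneg_of_roots_double (B := 2 * prodFormDeriv a z i u) fun t ht => ?_
  have hline := prodForm_update_add_smul ha z i u t
  have hcrit := hz _ (by rw [hline, hzu]; linarith) i u
  rw [prodFormDeriv_update_add_smul, hzu] at hcrit
  linarith

lemma prodForm_nonneg_of_eqOn_compl (ha : a.IsHermitian) (hz : ZerosAreCritical a)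
    (S : Finset (Fin k)) :
    ∀ e f : ∀ i, Fin (n i) → ℂ, (∀ j ∉ S, e j = f j) → 0 < prodForm a f → 0 ≤ prodForm a e := by
  induction S using Finset.induction_on with
  | empty =>
    intro e f hef hf
    rw [show e = f from funext fun j => hef j (Finset.notMem_empty j)]
    exact hf.le
  | @insert i S _ ih =>
    intro e f hef hf
    by_contra! he
    have agree : ∀ x : Fin (n i) → ℂ, ∀ j ∉ S,
        Function.update e i x j = Function.update f i x j := by
      intro x j hj
      by_cases hji : j = i
      · subst hji; simp
      · simp only [Function.update_of_ne hji]
        exact hef j (by simp [hji, hj])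
    have he' : prodForm a (Function.update e i (f i)) = 0 := by
      have h1 := ih _ f (by simpa using agree (f i)) hf
      have h2 := prodForm_update_mul_nonneg ha hz e i (f i) (e i)
      rw [Function.update_eq_self] at h2
      nlinarith
    have hf' : prodForm a (Function.update f i (e i)) = 0 := by
      have h1 : prodForm a (Function.update f i (e i)) ≤ 0 := by
        by_contra! h
        exact he.not_ge (ih e _ (by simpa using agree (e i)) h)
      have h2 := prodForm_update_mul_nonneg ha hz f i (e i) (f i)
      rw [Function.update_eq_self] at h2
      nlinarith
    have hpos : 0 < prodForm a (Function.update f i (e i + f i)) := by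
      have := prodForm_update_add_smul ha (Function.update f i (e i)) i (f i) 1
      rw [hf', hz _ hf' i (f i)] at this
      simp only [Function.update_self, Function.update_idem, Complex.ofReal_one, one_smul,
        Function.update_eq_self] at this
      rw [this]
      linarith
    have hneg : prodForm a (Function.update e i (e i + f i)) < 0 := by
      have := prodForm_update_add_smul ha (Function.update e i (f i)) i (e i) 1
      rw [he', hz _ he' i (e i)] at this
      simp only [Function.update_self, Function.update_idem, Complex.ofReal_one, one_smul,
        Function.update_eq_self, add_comm (f i)] at this
      rw [this]
      linarith
    exact hneg.not_ge (ih _ _ (agree _) hpos)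

lemma prodForm_nonneg_of_zerosAreCritical (ha : a.IsHermitian) (hz : ZerosAreCritical a)
    {f : ∀ i, Fin (n i) → ℂ} (hf : 0 < prodForm a f) (e : ∀ i, Fin (n i) → ℂ) :
    0 ≤ prodForm a e :=
  prodForm_nonneg_of_eqOn_compl ha hz Finset.univ e f (by simp) hf

end ProductForm

/-- main theorem.  A Hermitian operator `a` on `H⁽¹⁾ ⊗ ⋯ ⊗ H⁽ᵏ⁾` is an
entanglement witness (`Tr(a ϱ) ≥ 0` for all separable states `ϱ` and `Tr(a q) < 0` for at
least one state `q`) if and only if: (1) there is a pure product state `p` with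
`Tr(a p) > 0`; (2) condition (★) holds: for every pure product state `p` with
`Tr(a p) = 0`, `C(p) ⊆ I_a`; and (3) `a` is not positive semidefinite. -/
theorem isEntanglementWitness_iff {k : ℕ} (n : Fin k → ℕ)
    (a : Op n) (ha : a.IsHermitian) :
    ((∀ ϱ : Op n, IsSeparable n ϱ → 0 ≤ tinner a ϱ) ∧
      ∃ q : Op n, IsState q ∧ tinner a q < 0) ↔
    ((∃ p : Op n, IsPureProduct n p ∧ 0 < tinner a p) ∧
      StarCond n a ∧ ¬ a.PosSemidef) := by
  rw [forall_isSeparable_tinner_nonneg_iff ha, exists_isState_tinner_neg_iff ha,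
    exists_isPureProduct_tinner_pos_iff ha, starCond_iff_zerosAreCritical ha]
  constructor
  · rintro ⟨hnonneg, hpsd⟩
    refine ⟨?_, zerosAreCritical_of_nonneg ha hnonneg, hpsd⟩
    by_contra! hnonpos
    have hzero : a = 0 :=
      eq_zero_of_prodForm_eq_zero ha fun e => le_antisymm (hnonpos e) (hnonneg e)
    exact hpsd (hzero ▸ PosSemidef.zero)
  · rintro ⟨⟨f, hf⟩, hz, hpsd⟩
    exact ⟨prodForm_nonneg_of_zerosAreCritical ha hz hf, hpsd⟩

end EWitness
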